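/- arXiv:1203.2659 — 9 statements merged into one kernel-verified Lean document; each statement's English description precedes it below -/
import Mathlib

section
/- Let λ₁ and λ₂ be nonzero integers with |λ₁| ≠ |λ₂|. There exists a constant C > 0 such that for every prime p > max(|λ₁|, |λ₂|) there exists a set A ⊆ ℤ/pℤ with |A| ≥ p/2 − C·p/log p such that 0 ∉ λ₁·A + λ₂·A, i.e. there are no x, y ∈ A with λ₁·x + λ₂·y = 0 in ℤ/pℤ. -/
/-!
Let `u ∈ (ℤ/pℤ)ˣ` satisfy `λ₁ u + λ₂ = 0`, so that `λ₁ x + λ₂ y = 0` means `x = u y`. The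
cosets of `⟨u⟩` in `(ℤ/pℤ)ˣ` are cycles `c, cu, cu², …` of length `d = ord u`; keeping every
other element of each cycle gives a set `A` with `A ∩ uA = ∅` and `|A| ≥ (p - 1)(1 - 1/d)/2`.
Since `p ∣ λ₁ᵈ - (-λ₂)ᵈ ≠ 0`, we have `p ≤ (|λ₁| + |λ₂|)ᵈ`, so `d ≥ log p / log (|λ₁| + |λ₂|)`.
-/

open Finset

section Group

variable {G : Type*} [Group G]

theorem QuotientGroup.eq_and_eq_of_out_mul_pow_eq {u : G} {c c' : G ⧸ Subgroup.zpowers u}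
    {i j : ℕ} (hi : i < orderOf u) (hj : j < orderOf u) (h : c.out * u ^ i = c'.out * u ^ j) :
    c = c' ∧ i = j := by
  have hc : c = c' := by
    simpa only [QuotientGroup.mk_mul_of_mem _ (Subgroup.npow_mem_zpowers u _),
      QuotientGroup.out_eq'] using congrArg ((↑) : G → G ⧸ Subgroup.zpowers u) h
  subst hc
  exact ⟨rfl, pow_injOn_Iio_orderOf hi hj (mul_left_cancel h)⟩

theorem exists_finset_ne_mul [Finite G] (u : G) :
    ∃ A : Finset G, Nat.card G * orderOf u ≤ 2 * orderOf u * #A + Nat.card G ∧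
      ∀ a ∈ A, ∀ b ∈ A, a ≠ b * u := by
  classical
  have := Fintype.ofFinite (G ⧸ Subgroup.zpowers u)
  set d := orderOf u
  have hd : 0 < d := orderOf_pos u
  have hcard : Nat.card G = Nat.card (G ⧸ Subgroup.zpowers u) * d := by
    rw [Subgroup.card_eq_card_quotient_mul_card_subgroup, Nat.card_zpowers]
  let g : (G ⧸ Subgroup.zpowers u) × Fin (d / 2) → G := fun x => x.1.out * u ^ (2 * x.2.val)
  have hg : Function.Injective g := by
    rintro ⟨c, k⟩ ⟨c', k'⟩ h
    obtain ⟨rfl, hk⟩ :=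
      QuotientGroup.eq_and_eq_of_out_mul_pow_eq (by omega) (by omega) h
    exact Prod.ext rfl (Fin.ext (by omega))
  refine ⟨univ.image g, ?_, ?_⟩
  · rw [card_image_of_injective _ hg, card_univ, Fintype.card_prod, Fintype.card_fin,
      ← Nat.card_eq_fintype_card, hcard]
    nlinarith [Nat.lt_mul_div_succ d (two_pos : 0 < 2)]
  · simp only [mem_image, mem_univ, true_and]
    rintro _ ⟨⟨c, k⟩, rfl⟩ _ ⟨⟨c', k'⟩, rfl⟩ h
    rw [mul_assoc, ← pow_succ] at h
    have := (QuotientGroup.eq_and_eq_of_out_mul_pow_eq (by omega) (by omega) h).2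
    omega

end Group

theorem natCast_le_add_abs_pow_of_intCast_pow_eq {n d : ℕ} {a b : ℤ} (hab : |a| ≠ |b|)
    (hd : d ≠ 0) (h : (a : ZMod n) ^ d = (b : ZMod n) ^ d) : (n : ℤ) ≤ (|a| + |b|) ^ d := by
  have hne : a ^ d - b ^ d ≠ 0 := by
    rw [sub_ne_zero]
    intro h'
    exact hab ((pow_left_inj₀ (abs_nonneg a) (abs_nonneg b) hd).1 (by rw [← abs_pow, h', abs_pow]))
  have hdvd : (n : ℤ) ∣ a ^ d - b ^ d := by
    rw [← ZMod.intCast_zmod_eq_zero_iff_dvd]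
    push_cast
    rw [h, sub_self]
  calc (n : ℤ) ≤ |a ^ d - b ^ d| := Int.le_of_dvd (abs_pos.2 hne) ((dvd_abs _ _).2 hdvd)
    _ ≤ |a| ^ d + |b| ^ d := by simpa only [abs_pow] using abs_sub (a ^ d) (b ^ d)
    _ ≤ (|a| + |b|) ^ d := pow_add_pow_le (abs_nonneg a) (abs_nonneg b) hd

theorem ZMod.intCast_ne_zero_of_abs_lt {n : ℕ} {a : ℤ} (ha : a ≠ 0) (h : |a| < n) :
    (a : ZMod n) ≠ 0 := fun h0 =>
  ha (Int.eq_zero_of_abs_lt_dvd ((ZMod.intCast_zmod_eq_zero_iff_dvd a n).1 h0) h)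

theorem ZMod.log_le_orderOf_mul_log {n : ℕ} [NeZero n] {a b : ℤ} (hab : |a| ≠ |b|)
    {x : (ZMod n)ˣ} (hx : (a : ZMod n) * x + b = 0) :
    Real.log n ≤ orderOf x * Real.log (|a| + |b| : ℤ) := by
  have hpow : (a : ZMod n) ^ orderOf x = ((-b : ℤ) : ZMod n) ^ orderOf x := by
    rw [Int.cast_neg, ← eq_neg_of_add_eq_zero_left hx, mul_pow, ← Units.val_pow_eq_pow_val,
      pow_orderOf_eq_one, Units.val_one, mul_one]
  have hle := natCast_le_add_abs_pow_of_intCast_pow_eq (by rwa [abs_neg])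
    (orderOf_pos x).ne' hpow
  rw [abs_neg] at hle
  rw [← Real.log_pow]
  exact Real.log_le_log (by exact_mod_cast NeZero.pos n) (by exact_mod_cast hle)

theorem half_sub_mul_div_log_le {p d L a : ℝ} (hp : 1 < p) (hd : 0 < d) (hL : 0 ≤ L)
    (hlog : Real.log p ≤ d * L) (ha : (p - 1) * d ≤ 2 * d * a + (p - 1)) :
    p / 2 - (L + 1) * p / Real.log p ≤ a := by
  have hlogp : 0 < Real.log p := Real.log_pos hp
  have ha' : p - 1 - 2 * a ≤ (p - 1) / d := by
    rw [le_div_iff₀ hd]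
    linarith
  have hdiv : (p - 1) / d ≤ (p - 1) * L / Real.log p := by
    rw [div_le_div_iff₀ hd hlogp]
    nlinarith
  have hlogp_le : Real.log p ≤ p := (Real.log_le_sub_one_of_pos (by linarith)).trans (by linarith)
  have key : p / 2 - (L + 1) * p / Real.log p ≤ (p - 1) / 2 - (p - 1) * L / Real.log p / 2 := by
    rw [← sub_nonneg]
    field_simp
    nlinarith
  linarith

theorem large_set_avoiding_zero (l₁ l₂ : ℤ) (h₁ : l₁ ≠ 0) (h₂ : l₂ ≠ 0)
    (habs : |l₁| ≠ |l₂|) :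
    ∃ C : ℝ, 0 < C ∧ ∀ p : ℕ, p.Prime → max |l₁| |l₂| < (p : ℤ) →
      ∃ A : Finset (ZMod p),
        (p : ℝ) / 2 - C * p / Real.log p ≤ (A.card : ℝ) ∧
        ∀ x ∈ A, ∀ y ∈ A, (l₁ : ZMod p) * x + (l₂ : ZMod p) * y ≠ 0 := by
  set L := Real.log (|l₁| + |l₂| : ℤ)
  have hL : 0 ≤ L := Real.log_nonneg <| Int.cast_one_le_of_pos <| by
    linarith [Int.one_le_abs h₁, abs_nonneg l₂]
  refine ⟨L + 1, by linarith, fun p hp hlt => ?_⟩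
  have := Fact.mk hp
  have hl₁ := ZMod.intCast_ne_zero_of_abs_lt h₁ ((le_max_left _ _).trans_lt hlt)
  have hl₂ := ZMod.intCast_ne_zero_of_abs_lt h₂ ((le_max_right _ _).trans_lt hlt)
  let u := Units.mk0 (-(l₂ : ZMod p) / l₁) (div_ne_zero (neg_ne_zero.2 hl₂) hl₁)
  have hu : (l₁ : ZMod p) * u + l₂ = 0 := by
    rw [Units.val_mk0, mul_div_cancel₀ _ hl₁, neg_add_cancel]
  obtain ⟨B, hB_card, hB⟩ := exists_finset_ne_mul u
  refine ⟨B.map ⟨Units.val, Units.val_injective⟩, ?_, ?_⟩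
  · rw [Nat.card_eq_fintype_card, ZMod.card_units] at hB_card
    rw [card_map]
    refine half_sub_mul_div_log_le (by exact_mod_cast hp.one_lt) (by exact_mod_cast orderOf_pos u)
      hL (ZMod.log_le_orderOf_mul_log habs hu) ?_
    rw [← Nat.cast_pred hp.pos]
    exact_mod_cast hB_card
  · simp only [mem_map, Function.Embedding.coeFn_mk]
    rintro _ ⟨a, ha, rfl⟩ _ ⟨b, hb, rfl⟩ h
    refine hB a ha b hb (Units.ext (mul_left_cancel₀ hl₁ ?_))
    rw [Units.val_mul]
    linear_combination h - (b : ZMod p) * hu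
end

section
/- Let λ₁, λ₂ be integers and let α ∈ [0,1]. Suppose that for every ε₁ > 0 there exists a measurable set A ⊆ 𝕋 with μ(A) ≥ α − ε₁ such that λ₁·A ∩ λ₂·A = ∅. Then for every ε₂ > 0 there exist δ > 0 and p₀ such that for every prime p ≥ p₀ and every natural number t ≤ δ·p, there exists a set A′ ⊆ ℤ/pℤ with |A′| ≥ (α − ε₂)·p such that no element of {−t, −t+1, …, t} (reduced mod p) lies in λ₁·A′ − λ₂·A′. -/
/-!
Take a compact K ⊆ A of almost full measure. The compact sets λ₁·K and λ₂·K are disjoint, so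
their closed d-thickenings are still disjoint for some d > 0. Let A' be the set of residues
a mod p whose point a/p on the circle lies within 1/(2p) of K. The balls of radius 1/(2p)
around these points cover K, so |A'| ≥ p·μ(K). If λ₁a - λ₂b ≡ r with |r| ≤ δp, then λ₁·(a/p)
is close both to λ₁·K and to λ₂·(b/p), hence to λ₂·K, which the choice of d forbids once p
is large.
-/

open Pointwise MeasureTheory Metric Set

lemma MeasurableSet.exists_isCompact_ofReal_sub_le {X : Type*} [MeasurableSpace X]
    [TopologicalSpace X] {μ : Measure X} [μ.InnerRegularCompactLTTop] {A : Set X}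
    (hA : MeasurableSet A) (hμA : μ A ≠ ⊤) {a ε : ℝ} (hε : 0 < ε) (ha : ENNReal.ofReal a ≤ μ A) :
    ∃ K ⊆ A, IsCompact K ∧ ENNReal.ofReal (a - ε) ≤ μ K := by
  obtain ⟨K, hKA, hK, hlt⟩ := hA.exists_isCompact_lt_add hμA (ENNReal.ofReal_pos.mpr hε).ne'
  refine ⟨K, hKA, hK, ?_⟩
  rw [ENNReal.ofReal_sub a hε.le, tsub_le_iff_right]
  exact ha.trans hlt.le

section SeminormedAddCommGroup

variable {E : Type*} [SeminormedAddCommGroup E]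

lemma dist_zsmul_le (l : ℤ) (x y : E) : dist (l • x) (l • y) ≤ |(l : ℝ)| * dist x y := by
  rw [dist_eq_norm, dist_eq_norm, ← smul_sub, ← Int.norm_eq_abs]
  exact norm_zsmul_le l (x - y)

lemma IsCompact.zsmul_mem_cthickening_image {K : Set E} (hK : IsCompact K) {η : ℝ}
    (hη : 0 ≤ η) (l : ℤ) {x : E} (hx : x ∈ cthickening η K) :
    l • x ∈ cthickening (|(l : ℝ)| * η) ((l • ·) '' K) := by
  rw [hK.cthickening_eq_biUnion_closedBall hη] at hx
  obtain ⟨y, hyK, hxy⟩ := mem_iUnion₂.mp hx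
  exact mem_cthickening_of_dist_le _ (l • y) _ _ (mem_image_of_mem _ hyK)
    ((dist_zsmul_le l x y).trans (mul_le_mul_of_nonneg_left hxy (abs_nonneg _)))

lemma IsCompact.lt_norm_zsmul_sub_zsmul {K : Set E} (hK : IsCompact K) {l₁ l₂ : ℤ} {d η : ℝ}
    (hd : Disjoint (cthickening d ((l₁ • ·) '' K)) (cthickening d ((l₂ • ·) '' K)))
    (hη : 0 ≤ η) (hl₁ : |(l₁ : ℝ)| * η ≤ d / 2) (hl₂ : |(l₂ : ℝ)| * η ≤ d / 2)
    {x y : E} (hx : x ∈ cthickening η K) (hy : y ∈ cthickening η K) :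
    d / 2 < ‖l₁ • x - l₂ • y‖ := by
  by_contra! hclose
  have hη₁ : 0 ≤ |(l₁ : ℝ)| * η := by positivity
  have hx₁ : l₁ • x ∈ cthickening d ((l₁ • ·) '' K) :=
    cthickening_mono (by linarith) _ (hK.zsmul_mem_cthickening_image hη l₁ hx)
  have hx₂ : l₁ • x ∈ cthickening d ((l₂ • ·) '' K) := by
    have hy₂ := hK.zsmul_mem_cthickening_image hη l₂ hy
    have := mem_cthickening_of_dist_le _ _ (d / 2) _ hy₂ (by rwa [dist_eq_norm])
    exact cthickening_mono (by linarith) _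
      (cthickening_cthickening_subset (by linarith) (by positivity) _ this)
  exact disjoint_left.mp hd hx₁ hx₂

end SeminormedAddCommGroup

lemma UnitAddCircle.norm_coe_le_abs (x : ℝ) : ‖(x : UnitAddCircle)‖ ≤ |x| := by
  rw [UnitAddCircle.norm_eq]
  simpa using round_le x 0

namespace ZMod

variable {n : ℕ} [NeZero n]

lemma norm_toAddCircle_intCast_le (r : ℤ) : ‖toAddCircle (r : ZMod n)‖ ≤ |(r : ℝ)| / n := by
  simpa [toAddCircle_intCast, abs_div] using UnitAddCircle.norm_coe_le_abs ((r : ℝ) / n)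

lemma exists_dist_toAddCircle_le (x : UnitAddCircle) :
    ∃ a : ZMod n, dist (toAddCircle a) x ≤ 1 / (2 * n) := by
  obtain ⟨y, rfl⟩ := QuotientAddGroup.mk_surjective x
  have hn : (0 : ℝ) < n := Nat.cast_pos.mpr (NeZero.pos n)
  refine ⟨(round (n * y) : ℤ), ?_⟩
  rw [toAddCircle_intCast, dist_eq_norm, ← AddCircle.coe_sub]
  calc ‖((round (n * y) / n - y : ℝ) : UnitAddCircle)‖
      ≤ |round (n * y) / n - y| := UnitAddCircle.norm_coe_le_abs _
    _ = |n * y - round (n * y)| / n := by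
      rw [← abs_neg, ← abs_of_pos hn, ← abs_div, abs_of_pos hn]
      congr 1
      field_simp
      ring
    _ ≤ 1 / 2 / n := by gcongr; exact abs_sub_round _
    _ = 1 / (2 * n) := by ring

lemma exists_finset_volume_le_card_div (K : Set UnitAddCircle) :
    ∃ A : Finset (ZMod n), volume K ≤ ENNReal.ofReal (A.card / n) ∧
      ∀ a ∈ A, toAddCircle a ∈ cthickening (1 / (2 * n)) K := by
  classical
  set η : ℝ := 1 / (2 * n)
  set A : Finset (ZMod n) := Finset.univ.filter (fun a => toAddCircle a ∈ cthickening η K)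
  refine ⟨A, ?_, fun a ha => (Finset.mem_filter.mp ha).2⟩
  have hcover : K ⊆ ⋃ a ∈ A, closedBall (toAddCircle a) η := by
    intro x hx
    obtain ⟨a, ha⟩ := exists_dist_toAddCircle_le (n := n) x
    refine mem_biUnion (Finset.mem_filter.mpr ⟨Finset.mem_univ a, ?_⟩) ?_
    · exact mem_cthickening_of_dist_le _ x _ _ hx ha
    · rwa [mem_closedBall, dist_comm]
  have hball : ∀ a ∈ A, volume (closedBall (toAddCircle a) η) ≤ ENNReal.ofReal (1 / n) := by
    intro a _
    rw [AddCircle.volume_closedBall]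
    exact ENNReal.ofReal_le_ofReal ((min_le_right _ _).trans_eq (by ring))
  calc volume K ≤ volume (⋃ a ∈ A, closedBall (toAddCircle a) η) := measure_mono hcover
    _ ≤ ∑ a ∈ A, volume (closedBall (toAddCircle a) η) := measure_biUnion_finset_le _ _
    _ ≤ A.card • ENNReal.ofReal (1 / n) := Finset.sum_le_card_nsmul _ _ _ hball
    _ = ENNReal.ofReal (A.card / n) := by
      rw [nsmul_eq_mul, ← ENNReal.ofReal_natCast, ← ENNReal.ofReal_mul (Nat.cast_nonneg _),
        mul_one_div]

lemma intCast_notMem_sub_of_disjoint_cthickening {K : Set UnitAddCircle} (hK : IsCompact K)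
    {l₁ l₂ : ℤ} {d : ℝ}
    (hd : Disjoint (cthickening d ((l₁ • ·) '' K)) (cthickening d ((l₂ • ·) '' K)))
    (hl₁ : |(l₁ : ℝ)| ≤ d * n) (hl₂ : |(l₂ : ℝ)| ≤ d * n) {A : Finset (ZMod n)}
    (hA : ∀ a ∈ A, toAddCircle a ∈ cthickening (1 / (2 * n)) K) {r : ℤ}
    (hr : |(r : ℝ)| ≤ d / 2 * n) :
    (r : ZMod n) ∉ (A.image fun a => l₁ • a) - (A.image fun a => l₂ • a) := by
  have hn : (0 : ℝ) < n := Nat.cast_pos.mpr (NeZero.pos n)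
  have hl : ∀ l : ℝ, |l| ≤ d * n → |l| * (1 / (2 * n)) ≤ d / 2 := fun l hln => by
    rw [mul_one_div, div_le_div_iff₀ (by positivity) two_pos]; linarith
  intro hmem
  obtain ⟨_, hu, _, hv, hab⟩ := Finset.mem_sub.mp hmem
  obtain ⟨a, ha, rfl⟩ := Finset.mem_image.mp hu
  obtain ⟨b, hb, rfl⟩ := Finset.mem_image.mp hv
  have hfar := hK.lt_norm_zsmul_sub_zsmul hd (by positivity) (hl _ hl₁) (hl _ hl₂) (hA a ha)
    (hA b hb)
  rw [← map_zsmul, ← map_zsmul, ← map_sub, hab] at hfar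
  have hrn : |(r : ℝ)| / n ≤ d / 2 := (div_le_iff₀ hn).mpr hr
  linarith [norm_toAddCircle_intCast_le (n := n) r]

end ZMod

theorem transfer_circle_to_ZMod_general (l₁ l₂ : ℤ) (α : ℝ)
    (h : ∀ ε₁ : ℝ, 0 < ε₁ → ∃ A : Set UnitAddCircle, MeasurableSet A ∧
        ENNReal.ofReal (α - ε₁) ≤ volume A ∧
        ((fun x => l₁ • x) '' A) ∩ ((fun x => l₂ • x) '' A) = ∅) :
    ∀ ε₂ : ℝ, 0 < ε₂ → ∃ δ : ℝ, 0 < δ ∧ ∃ p₀ : ℕ,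
      ∀ p : ℕ, p.Prime → p₀ ≤ p → ∀ t : ℕ, (t : ℝ) ≤ δ * p →
        ∃ A' : Finset (ZMod p), (α - ε₂) * p ≤ (A'.card : ℝ) ∧
          ∀ r : ℤ, |r| ≤ (t : ℤ) →
            (r : ZMod p) ∉ (A'.image fun a => l₁ • a) - (A'.image fun a => l₂ • a) := by
  intro ε₂ hε₂
  obtain ⟨A, hAm, hAvol, hAdisj⟩ := h (ε₂ / 2) (half_pos hε₂)
  obtain ⟨K, hKA, hK, hKvol⟩ :=
    hAm.exists_isCompact_ofReal_sub_le (measure_ne_top _ _) (half_pos hε₂) hAvol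
  rw [sub_sub, add_halves] at hKvol
  have hdisj : Disjoint ((l₁ • ·) '' K) ((l₂ • ·) '' K) :=
    (disjoint_iff_inter_eq_empty.mpr hAdisj).mono (image_mono hKA) (image_mono hKA)
  obtain ⟨d, hd, hdth⟩ := hdisj.exists_cthickenings (hK.image (continuous_zsmul l₁))
    (hK.image (continuous_zsmul l₂)).isClosed
  refine ⟨d / 2, half_pos hd, ⌈(|(l₁ : ℝ)| + |(l₂ : ℝ)|) / d⌉₊, fun p hp hp₀ t ht => ?_⟩
  have : NeZero p := NeZero.of_pos hp.pos
  have hp_pos : (0 : ℝ) < p := Nat.cast_pos.mpr hp.pos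
  have hpd : |(l₁ : ℝ)| + |(l₂ : ℝ)| ≤ d * p := (div_le_iff₀' hd).mp (Nat.ceil_le.mp hp₀)
  obtain ⟨A', hcard, hA'⟩ := ZMod.exists_finset_volume_le_card_div (n := p) K
  refine ⟨A', ?_, fun r hr => ?_⟩
  · have := (ENNReal.ofReal_le_ofReal_iff (by positivity)).mp (hKvol.trans hcard)
    rwa [le_div_iff₀ hp_pos] at this
  · refine ZMod.intCast_notMem_sub_of_disjoint_cthickening hK hdth
      (by linarith [abs_nonneg (l₂ : ℝ)]) (by linarith [abs_nonneg (l₁ : ℝ)]) hA' ?_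
    exact le_trans (by exact_mod_cast hr) ht

theorem transfer_circle_to_ZMod (l₁ l₂ : ℤ) (α : ℝ) (hα₀ : 0 ≤ α) (hα₁ : α ≤ 1)
    (h : ∀ ε₁ : ℝ, 0 < ε₁ → ∃ A : Set UnitAddCircle, MeasurableSet A ∧
        ENNReal.ofReal (α - ε₁) ≤ volume A ∧
        ((fun x => l₁ • x) '' A) ∩ ((fun x => l₂ • x) '' A) = ∅) :
    ∀ ε₂ : ℝ, 0 < ε₂ → ∃ δ : ℝ, 0 < δ ∧ ∃ p₀ : ℕ,
      ∀ p : ℕ, p.Prime → p₀ ≤ p → ∀ t : ℕ, (t : ℝ) ≤ δ * p →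
        ∃ A' : Finset (ZMod p), (α - ε₂) * p ≤ (A'.card : ℝ) ∧
          ∀ r : ℤ, |r| ≤ (t : ℤ) →
            (r : ZMod p) ∉ (A'.image fun a => l₁ • a) - (A'.image fun a => l₂ • a) :=
  transfer_circle_to_ZMod_general l₁ l₂ α h
end

section
/- Let λ₁, λ₂ be integers and set s = ⌈(|λ₁| + |λ₂|)/2⌉. Let p be a prime and let A ⊆ ℤ/pℤ be a set such that no element of {−s, −s+1, …, s} (reduced mod p) lies in λ₁·A − λ₂·A. Then there exists a measurable set à ⊆ 𝕋 with μ(Ã) = |A|/p such that λ₁·Ã ∩ λ₂·Ã = ∅. -/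
open Pointwise MeasureTheory

theorem transfer_ZMod_to_circle (l₁ l₂ : ℤ) (s : ℤ)
    (hs : s = ⌈((|l₁| + |l₂| : ℤ) : ℚ) / 2⌉)
    (p : ℕ) (hp : p.Prime) (A : Finset (ZMod p))
    (hA : ∀ r : ℤ, |r| ≤ s →
      (r : ZMod p) ∉ (A.image fun a => l₁ • a) - (A.image fun a => l₂ • a)) :
    ∃ Atil : Set UnitAddCircle, MeasurableSet Atil ∧
      volume Atil = ENNReal.ofReal ((A.card : ℝ) / p) ∧
      ((fun x => l₁ • x) '' Atil) ∩ ((fun x => l₂ • x) '' Atil) = ∅ := by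
  haveI : NeZero p := ⟨hp.ne_zero⟩
  have hp0 : (0:ℝ) < p := by exact_mod_cast hp.pos
  set I : ZMod p → Set ℝ :=
    fun a => Set.Ioc (((a.val : ℝ) - 2⁻¹)/p) (((a.val : ℝ) + 2⁻¹)/p) with hI
  set S : Set ℝ := ⋃ a ∈ A, I a with hSdef
  set t : ℝ := (-2⁻¹)/(p:ℝ) with ht
  have ht1 : t + 1 = ((p:ℝ) - 2⁻¹)/p := by
    rw [ht]; field_simp; ring
  -- each point of S lies in the fundamental domain Ioc t (t+1)
  have hIsub : ∀ a : ZMod p, I a ⊆ Set.Ioc t (t+1) := by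
    intro a x hx
    obtain ⟨hx1, hx2⟩ := hx
    have hval0 : (0:ℝ) ≤ (a.val : ℝ) := by positivity
    have hvalp : (a.val : ℝ) ≤ (p:ℝ) - 1 := by
      have hz : (a.val : ℝ) + 1 ≤ (p : ℝ) := by exact_mod_cast a.val_lt
      linarith
    constructor
    · have h1 : t ≤ ((a.val : ℝ) - 2⁻¹)/p := by
        rw [ht]; gcongr; linarith
      linarith
    · have h2 : ((a.val : ℝ) + 2⁻¹)/p ≤ t + 1 := by
        rw [ht1]; gcongr; linarith
      linarith
  have hSsub : S ⊆ Set.Ioc t (t+1) := by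
    intro x hx
    rw [hSdef, Set.mem_iUnion₂] at hx
    obtain ⟨a, _, hx⟩ := hx
    exact hIsub a hx
  have hSmeas : MeasurableSet S := A.measurableSet_biUnion (fun a _ => measurableSet_Ioc)
  set Atil : Set UnitAddCircle := (fun x : ℝ => (x : UnitAddCircle)) '' S with hAtil
  -- measurability
  have hAtilMeas : MeasurableSet Atil := by
    have hpre : (fun x : ℝ => (x : UnitAddCircle)) ⁻¹' Atil
        = ⋃ n : ℤ, (fun x => x + (n:ℝ)) ⁻¹' S := by
      ext x
      simp only [hAtil, Set.mem_preimage, Set.mem_image, Set.mem_iUnion]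
      constructor
      · rintro ⟨y, hy, hxy⟩
        have : y - x ∈ AddSubgroup.zmultiples (1:ℝ) :=
          QuotientAddGroup.eq_iff_sub_mem.mp hxy
        obtain ⟨k, hk⟩ := AddSubgroup.mem_zmultiples_iff.mp this
        refine ⟨k, ?_⟩
        have hk' : (k:ℝ) = y - x := by simpa using hk
        have : x + (k:ℝ) = y := by linarith
        rwa [this]
      · rintro ⟨n, hn⟩
        refine ⟨x + n, hn, ?_⟩
        apply QuotientAddGroup.eq_iff_sub_mem.mpr
        exact AddSubgroup.mem_zmultiples_iff.mpr ⟨n, by simp⟩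
    apply measurableSet_quotient.mpr
    show MeasurableSet ((fun x : ℝ => (x : UnitAddCircle)) ⁻¹' _)
    rw [hpre]
    exact MeasurableSet.iUnion fun n => (measurable_add_const _) hSmeas
  -- the preimage of Atil inside the fundamental domain is exactly S
  have hfund : (QuotientAddGroup.mk ⁻¹' Atil) ∩ Set.Ioc t (t + 1) = S := by
    ext x
    constructor
    · rintro ⟨hx1, hx2⟩
      rw [Set.mem_preimage, hAtil] at hx1
      obtain ⟨y, hyS, hyx⟩ := hx1
      have hsub : y - x ∈ AddSubgroup.zmultiples (1:ℝ) :=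
        QuotientAddGroup.eq_iff_sub_mem.mp hyx
      obtain ⟨k, hk⟩ := AddSubgroup.mem_zmultiples_iff.mp hsub
      have hk' : (k:ℝ) = y - x := by simpa using hk
      have hyI := hSsub hyS
      have hk0 : (k:ℝ) = 0 := by
        have h1 : (k:ℝ) < 1 := by
          obtain ⟨hy1, hy2⟩ := hyI; obtain ⟨hx1', hx2'⟩ := hx2; linarith
        have h2 : (-1:ℝ) < k := by
          obtain ⟨hy1, hy2⟩ := hyI; obtain ⟨hx1', hx2'⟩ := hx2; linarith
        have hk1 : k < 1 := by exact_mod_cast h1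
        have hk2 : -1 < k := by exact_mod_cast h2
        have : k = 0 := by omega
        exact_mod_cast congrArg (Int.cast : ℤ → ℝ) this
      have : y = x := by linarith
      rwa [← this]
    · intro hx
      exact ⟨Set.mem_preimage.mpr ⟨x, hx, rfl⟩, hSsub hx⟩
  refine ⟨Atil, hAtilMeas, ?_, ?_⟩
  · -- measure computation
    have hvol := AddCircle.add_projection_respects_measure (T := 1) t hAtilMeas
    rw [hvol, hfund]
    -- volume S
    have hdisjI : (↑A : Set (ZMod p)).PairwiseDisjoint I := by
      intro a _ b _ hab
      have hv : a.val ≠ b.val := fun h => hab (ZMod.val_injective p h)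
      refine Set.Ioc_disjoint_Ioc.mpr ?_
      rcases lt_or_gt_of_ne hv with h | h
      · have hle : (a.val:ℝ) + 1 ≤ (b.val:ℝ) := by exact_mod_cast h
        calc min (((a.val:ℝ) + 2⁻¹)/p) (((b.val:ℝ) + 2⁻¹)/p)
            ≤ ((a.val:ℝ) + 2⁻¹)/p := min_le_left _ _
          _ ≤ ((b.val:ℝ) - 2⁻¹)/p := by gcongr; linarith
          _ ≤ max (((a.val:ℝ) - 2⁻¹)/p) (((b.val:ℝ) - 2⁻¹)/p) := le_max_right _ _
      · have hle : (b.val:ℝ) + 1 ≤ (a.val:ℝ) := by exact_mod_cast h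
        calc min (((a.val:ℝ) + 2⁻¹)/p) (((b.val:ℝ) + 2⁻¹)/p)
            ≤ ((b.val:ℝ) + 2⁻¹)/p := min_le_right _ _
          _ ≤ ((a.val:ℝ) - 2⁻¹)/p := by gcongr; linarith
          _ ≤ max (((a.val:ℝ) - 2⁻¹)/p) (((b.val:ℝ) - 2⁻¹)/p) := le_max_left _ _
    rw [hSdef, measure_biUnion_finset hdisjI (fun a _ => measurableSet_Ioc)]
    have hone : ∀ a ∈ A, volume (I a) = ENNReal.ofReal (1/(p:ℝ)) := by
      intro a _
      rw [hI]
      simp only [Real.volume_Ioc]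
      congr 1
      rw [div_sub_div_same]
      norm_num
    rw [Finset.sum_congr rfl hone, Finset.sum_const, nsmul_eq_mul]
    rw [← ENNReal.ofReal_natCast A.card, ← ENNReal.ofReal_mul (by positivity)]
    congr 1
    field_simp
  · -- disjointness of the dilates
    rw [Set.eq_empty_iff_forall_notMem]
    rintro z ⟨⟨x', ⟨x, hxS, rfl⟩, hz1⟩, y', ⟨y, hyS, rfl⟩, hz2⟩
    have hcoe : ((l₁ • x : ℝ) : UnitAddCircle) = ((l₂ • y : ℝ) : UnitAddCircle) := by
      rw [QuotientAddGroup.mk_zsmul, QuotientAddGroup.mk_zsmul]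
      rw [show (l₁ • (x : UnitAddCircle)) = z from hz1,
        show (l₂ • (y : UnitAddCircle)) = z from hz2]
    have hsub : (l₁ • x : ℝ) - (l₂ • y : ℝ) ∈ AddSubgroup.zmultiples (1:ℝ) :=
      QuotientAddGroup.eq_iff_sub_mem.mp hcoe
    obtain ⟨n, hn⟩ := AddSubgroup.mem_zmultiples_iff.mp hsub
    have hn' : (n:ℝ) = l₁ * x - l₂ * y := by
      simpa [zsmul_eq_mul] using hn
    rw [hSdef, Set.mem_iUnion₂] at hxS hyS
    obtain ⟨a, haA, hxa⟩ := hxS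
    obtain ⟨b, hbA, hyb⟩ := hyS
    set r : ℤ := l₁ * (a.val:ℤ) - l₂ * (b.val:ℤ) - n * (p:ℤ) with hrdef
    -- bounds on the fractional parts
    have hxl : (a.val:ℝ) - 2⁻¹ < x * p := (div_lt_iff₀ hp0).mp hxa.1
    have hxu : x * p ≤ (a.val:ℝ) + 2⁻¹ := (le_div_iff₀ hp0).mp hxa.2
    have hyl : (b.val:ℝ) - 2⁻¹ < y * p := (div_lt_iff₀ hp0).mp hyb.1
    have hyu : y * p ≤ (b.val:ℝ) + 2⁻¹ := (le_div_iff₀ hp0).mp hyb.2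
    have hxabs : |x * p - (a.val:ℝ)| ≤ 2⁻¹ := abs_le.mpr ⟨by linarith, by linarith⟩
    have hyabs : |y * p - (b.val:ℝ)| ≤ 2⁻¹ := abs_le.mpr ⟨by linarith, by linarith⟩
    have hr : (r:ℝ) = l₂ * (y * p - (b.val:ℝ)) - l₁ * (x * p - (a.val:ℝ)) := by
      rw [hrdef]
      push_cast
      linear_combination (-(p:ℝ)) * hn'
    have hrabs : |(r:ℝ)| ≤ ((|l₁|:ℤ):ℝ)/2 + ((|l₂|:ℤ):ℝ)/2 := by
      push_cast
      calc |(r:ℝ)| = |l₂ * (y * p - (b.val:ℝ)) - l₁ * (x * p - (a.val:ℝ))| := by rw [hr]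
        _ ≤ |(l₂:ℝ) * (y * p - (b.val:ℝ))| + |(l₁:ℝ) * (x * p - (a.val:ℝ))| := abs_sub _ _
        _ = |(l₂:ℝ)| * |y * p - (b.val:ℝ)| + |(l₁:ℝ)| * |x * p - (a.val:ℝ)| := by
            rw [abs_mul, abs_mul]
        _ ≤ |(l₂:ℝ)| * 2⁻¹ + |(l₁:ℝ)| * 2⁻¹ := by
            gcongr <;> exact abs_nonneg _
        _ = |(l₁:ℝ)|/2 + |(l₂:ℝ)|/2 := by ring
    have hZ : 2 * |r| ≤ |l₁| + |l₂| := by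
      have : (2:ℝ) * ((|r|:ℤ):ℝ) ≤ ((|l₁|:ℤ):ℝ) + ((|l₂|:ℤ):ℝ) := by
        rw [Int.cast_abs]
        linarith
      exact_mod_cast this
    have hrs : |r| ≤ s := by
      rw [hs]
      have h1 : ((|r|:ℤ):ℚ) ≤ ((|l₁| + |l₂| : ℤ) : ℚ)/2 := by
        have h2 : ((2*|r|:ℤ):ℚ) ≤ ((|l₁| + |l₂| : ℤ):ℚ) := by exact_mod_cast hZ
        push_cast at h2 ⊢
        linarith
      have h2 := Int.le_ceil (((|l₁| + |l₂| : ℤ) : ℚ)/2)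
      exact_mod_cast h1.trans h2
    apply hA r hrs
    rw [Finset.mem_sub]
    refine ⟨l₁ • a, Finset.mem_image_of_mem _ haA, l₂ • b, Finset.mem_image_of_mem _ hbA, ?_⟩
    have hva : ((a.val : ℕ) : ZMod p) = a := ZMod.natCast_rightInverse a
    have hvb : ((b.val : ℕ) : ZMod p) = b := ZMod.natCast_rightInverse b
    rw [hrdef]
    push_cast [hva, hvb, ZMod.natCast_self, zsmul_eq_mul]
    ring
end

section
/- Let λ be an integer with |λ| ≥ 2 and let A ⊆ 𝕋 be a measurable set such that A ∩ λ·A = ∅. Then μ(A) < 1/2. -/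
/-!
The dilation `T x = λ • x` preserves Haar measure, so `A` and `T⁻¹ A` are disjoint sets of equal
measure and `2 μ(A) ≤ 1`. In the equality case `T⁻¹ A` is a.e. the complement of `A`, hence
`A` is a.e. invariant under `T ∘ T`, the dilation by `λ²`. That dilation is ergodic, so `A` would be
null or conull, which is incompatible with `μ(A) = 1/2`.
-/

open MeasureTheory

namespace MeasureTheory

variable {α : Type*} [MeasurableSpace α] {μ : Measure α} [IsProbabilityMeasure μ]
  {T : α → α} {A B : Set α}

lemma ae_eq_compl_of_disjoint_of_measure_add_eq_one (hA : NullMeasurableSet A μ)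
    (hB : NullMeasurableSet B μ) (hAB : Disjoint A B) (h : μ A + μ B = 1) : B =ᵐ[μ] Aᶜ := by
  refine ae_eq_of_subset_of_measure_ge (t := Aᶜ) hAB.subset_compl_left ?_ hB (measure_ne_top μ _)
  rw [prob_compl_eq_one_sub₀ hA, ← h, ENNReal.add_sub_cancel_left (measure_ne_top μ A)]

lemma MeasurePreserving.measure_le_half_of_disjoint_preimage (hT : MeasurePreserving T μ μ)
    (hA : NullMeasurableSet A μ) (hdisj : Disjoint A (T ⁻¹' A)) : μ A ≤ 1 / 2 := by
  have hsum : μ A + μ A ≤ 1 := calc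
    μ A + μ A = μ (A ∪ T ⁻¹' A) := by
      rw [measure_union₀ (hA.preimage hT.quasiMeasurePreserving) hdisj.aedisjoint,
        hT.measure_preimage hA]
    _ ≤ 1 := prob_le_one
  rwa [ENNReal.le_div_iff_mul_le (by norm_num) (by norm_num), mul_two]

theorem MeasurePreserving.measure_lt_half_of_disjoint_preimage (hT : MeasurePreserving T μ μ)
    (hT2 : QuasiErgodic (T ∘ T) μ) (hA : NullMeasurableSet A μ)
    (hdisj : Disjoint A (T ⁻¹' A)) : μ A < 1 / 2 := by
  refine (hT.measure_le_half_of_disjoint_preimage hA hdisj).lt_of_ne fun hhalf => ?_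
  have hcompl : T ⁻¹' A =ᵐ[μ] Aᶜ := by
    refine ae_eq_compl_of_disjoint_of_measure_add_eq_one hA
      (hA.preimage hT.quasiMeasurePreserving) hdisj ?_
    rw [hT.measure_preimage hA, hhalf, ENNReal.add_halves]
  have hinv : (T ∘ T) ⁻¹' A =ᵐ[μ] A :=
    (hT.quasiMeasurePreserving.preimage_ae_eq hcompl).trans (ae_eq_set_compl.mpr hcompl)
  rcases hT2.ae_empty_or_univ₀ hA hinv with hnull | hconull
  · rw [measure_congr hnull, measure_empty] at hhalf
    exact (ENNReal.half_pos one_ne_zero).ne hhalf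
  · rw [measure_congr hconull, measure_univ] at hhalf
    exact (ENNReal.half_lt_self one_ne_zero ENNReal.one_ne_top).ne' hhalf

end MeasureTheory

lemma Set.disjoint_preimage_of_disjoint_image {α : Type*} {f : α → α} {A : Set α}
    (h : Disjoint A (f '' A)) : Disjoint A (f ⁻¹' A) :=
  Set.disjoint_left.mpr fun _ hx hfx => Set.disjoint_right.mp h ⟨_, hx, rfl⟩ hfx

theorem measure_lt_half_of_disjoint_dilate (l : ℤ) (hl : 2 ≤ |l|)
    (A : Set UnitAddCircle) (hA : MeasurableSet A)
    (hdisj : A ∩ ((fun x => l • x) '' A) = ∅) :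
    volume A < 1 / 2 := by
  have : IsProbabilityMeasure (volume : Measure UnitAddCircle) := ⟨UnitAddCircle.measure_univ⟩
  have hdilate : Ergodic (fun x : UnitAddCircle => l • x) volume :=
    AddCircle.ergodic_zsmul (by omega)
  have hdilate_sq : Ergodic ((fun x : UnitAddCircle => l • x) ∘ fun x => l • x) volume := by
    have h : 1 < |l * l| := by rw [abs_mul]; nlinarith
    simpa only [Function.comp_def, ← mul_smul] using AddCircle.ergodic_zsmul h
  exact hdilate.toMeasurePreserving.measure_lt_half_of_disjoint_preimage
    hdilate_sq.quasiErgodic hA.nullMeasurableSet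
    (Set.disjoint_preimage_of_disjoint_image (Set.disjoint_iff_inter_eq_empty.mpr hdisj))
end

section
/- (Rokhlin's Lemma for the circle.) Let φ : 𝕋 → 𝕋 be a measurable map which is measure-preserving and ergodic with respect to the Haar probability measure μ. Then for every integer n ≥ 1 and every ε > 0 there exists a measurable set B ⊆ 𝕋 such that the sets B, φ(B), φ²(B), …, φ^{n−1}(B) (forward images under iterates of φ) are pairwise disjoint and μ(B) ≥ 1/n − ε. -/
open MeasureTheory
open scoped ENNReal

/-- Non-invertible Rokhlin lemma core: given any set `A` of positive measure, there is a
measurable set `C` whose preimages `φ^[i] ⁻¹' C`, `i < n`, are pairwise disjoint and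
`1 ≤ n * μ C + (n-1) * μ A`. -/
lemma rokhlin_aux {α : Type*} [MeasurableSpace α] (μ : Measure α)
    [IsProbabilityMeasure μ] (φ : α → α)
    (hφ : MeasurePreserving φ μ μ)
    (herg : ∀ S : Set α, MeasurableSet S → φ ⁻¹' S = S → μ S = 0 ∨ μ S = 1)
    (n : ℕ) (hn : 1 ≤ n) (A : Set α) (hA : MeasurableSet A) (hA0 : 0 < μ A) :
    ∃ C : Set α, MeasurableSet C ∧
      (∀ i j : ℕ, i < j → j < n → Disjoint (φ^[i] ⁻¹' C) (φ^[j] ⁻¹' C)) ∧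
      1 ≤ (n : ℝ≥0∞) * μ C + ((n - 1 : ℕ) : ℝ≥0∞) * μ A := by
  classical
  set Hit : ℕ → Set α := fun k => φ^[k] ⁻¹' A with hHit
  have hHitm : ∀ k, MeasurableSet (Hit k) := fun k => ((hφ.iterate k).measurable) hA
  set D : ℕ → Set α := fun j => Hit j \ ⋃ k, ⋃ _ : k < j, Hit k with hD
  have hDmem : ∀ j x, x ∈ D j ↔ (φ^[j] x ∈ A ∧ ∀ k < j, φ^[k] x ∉ A) := by
    intro j x
    simp [hD, hHit, Set.mem_diff]
  have hDm : ∀ j, MeasurableSet (D j) := by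
    intro j
    exact (hHitm j).diff (MeasurableSet.iUnion fun k => MeasurableSet.iUnion fun _ => hHitm k)
  -- shifting along the orbit decreases the hitting time
  have hshift : ∀ j i x, x ∈ D j → i ≤ j → φ^[i] x ∈ D (j - i) := by
    intro j i x hx hij
    rw [hDmem] at hx ⊢
    obtain ⟨h1, h2⟩ := hx
    constructor
    · rw [← Function.iterate_add_apply, Nat.sub_add_cancel hij]
      exact h1
    · intro k hk
      rw [← Function.iterate_add_apply]
      exact h2 (k + i) (by omega)
  have hDdisj : ∀ p q x, x ∈ D p → x ∈ D q → p = q := by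
    intro p q x hp hq
    rw [hDmem] at hp hq
    rcases lt_trichotomy p q with h | h | h
    · exact absurd hp.1 (hq.2 p h)
    · exact h
    · exact absurd hq.1 (hp.2 q h)
  set C : Set α := ⋃ m, D (m * n + (n - 1)) with hCdef
  have hCm : MeasurableSet C := MeasurableSet.iUnion fun m => hDm _
  refine ⟨C, hCm, ?_, ?_⟩
  · -- disjointness of preimages
    intro i j hij hj
    rw [Set.disjoint_left]
    rintro x hxi hxj
    simp only [hCdef, Set.mem_preimage, Set.mem_iUnion] at hxi hxj
    obtain ⟨a, ha⟩ := hxi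
    obtain ⟨b, hb⟩ := hxj
    have hin : j - i ≤ a * n + (n - 1) := le_trans (by omega) (Nat.le_add_left _ _)
    have h2 : φ^[j - i] (φ^[i] x) ∈ D (a * n + (n - 1) - (j - i)) := hshift _ _ _ ha hin
    rw [← Function.iterate_add_apply, Nat.sub_add_cancel hij.le] at h2
    have heq := hDdisj _ _ _ hb h2
    have hba : b < a := by
      by_contra hcon
      push_neg at hcon
      have : a * n ≤ b * n := Nat.mul_le_mul_right n hcon
      omega
    have hmul : b * n + n ≤ a * n := by
      calc b * n + n = (b + 1) * n := by ring
        _ ≤ a * n := Nat.mul_le_mul_right n hba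
    omega
  · -- measure estimate
    set G := ⋃ k, Hit k with hG
    have hGm : MeasurableSet G := MeasurableSet.iUnion hHitm
    have hGmono : ∀ N, φ^[N + 1] ⁻¹' G ⊆ φ^[N] ⁻¹' G := by
      intro N x hx
      simp only [Set.mem_preimage, hG, Set.mem_iUnion, hHit] at hx ⊢
      obtain ⟨k, hk⟩ := hx
      refine ⟨k + 1, ?_⟩
      rw [← Function.iterate_add_apply] at hk ⊢
      rw [show k + 1 + N = k + (N + 1) by omega]
      exact hk
    have hanti : Antitone fun N => φ^[N] ⁻¹' G :=
      antitone_nat_of_succ_le fun N => hGmono N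
    have hSN : ∀ N : ℕ, μ (φ^[N] ⁻¹' G) = μ G := fun N =>
      (hφ.iterate N).measure_preimage hGm.nullMeasurableSet
    set S' : Set α := ⋂ N, φ^[N] ⁻¹' G with hS'
    have hS'm : MeasurableSet S' :=
      MeasurableSet.iInter fun N => (hφ.iterate N).measurable hGm
    have hinv : φ ⁻¹' S' = S' := by
      ext x
      simp only [hS', Set.mem_preimage, Set.mem_iInter]
      constructor
      · intro h N
        cases N with
        | zero =>
          have h0 : φ^[0 + 1] x ∈ G := by
            simpa [Function.iterate_succ_apply] using h 0
          exact hGmono 0 h0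
        | succ N =>
          have := h N
          rwa [← Function.iterate_succ_apply] at this
      · intro h N
        rw [← Function.iterate_succ_apply]
        exact h (N + 1)
    have hS'meas : μ S' = μ G := by
      have := Directed.measure_iInter
        (s := fun N : ℕ => φ^[N] ⁻¹' G)
        (fun N => ((hφ.iterate N).measurable hGm).nullMeasurableSet)
        (hanti.directed_ge) ⟨0, by simp [hSN 0]; exact (measure_ne_top μ G)⟩
      rw [hS', this]
      simp [hSN]
    have hG1 : μ G = 1 := by
      rcases herg S' hS'm hinv with h0 | h1
      · exfalso
        have : 0 < μ S' := by
          rw [hS'meas]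
          exact lt_of_lt_of_le hA0 (measure_mono (by
            intro x hx
            exact Set.mem_iUnion.2 ⟨0, by simpa [hHit] using hx⟩))
        exact absurd h0 this.ne'
      · have hsub : S' ⊆ G := by
          intro x hx
          have := Set.mem_iInter.1 hx 0
          simpa using this
        refine le_antisymm prob_le_one ?_
        calc (1 : ℝ≥0∞) = μ S' := h1.symm
          _ ≤ μ G := measure_mono hsub
    -- coverage
    have hcov : G ⊆ (⋃ i ∈ Finset.range n, φ^[i] ⁻¹' C) ∪
        ⋃ i ∈ Finset.range (n - 1), Hit i := by
      intro x hx
      rw [hG, Set.mem_iUnion] at hx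
      have hex : ∃ k, φ^[k] x ∈ A := by
        obtain ⟨k, hk⟩ := hx
        exact ⟨k, hk⟩
      set t := Nat.find hex with ht
      have hxt : x ∈ D t :=
        (hDmem t x).2 ⟨Nat.find_spec hex, fun k hk => Nat.find_min hex hk⟩
      by_cases hcase : t < n - 1
      · right
        exact Set.mem_biUnion (Finset.mem_range.2 hcase) (Nat.find_spec hex)
      · left
        push_neg at hcase
        set e := t - (n - 1) with he
        set i := e % n with hi
        set q := e / n with hq
        have hdm : n * q + i = e := Nat.div_add_mod e n
        have hi_lt : i < n := Nat.mod_lt _ (by omega)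
        have hile : i ≤ t := by
          have := Nat.mod_le e n
          omega
        have hsh := hshift t i x hxt hile
        have hteq : t - i = q * n + (n - 1) := by
          rw [mul_comm q n]
          generalize hQ : n * q = Q at hdm ⊢
          omega
        rw [hteq] at hsh
        refine Set.mem_biUnion (Finset.mem_range.2 hi_lt) ?_
        simp only [hCdef, Set.mem_preimage, Set.mem_iUnion]
        exact ⟨q, hsh⟩
    have hCpre : ∀ i : ℕ, μ (φ^[i] ⁻¹' C) = μ C := fun i =>
      (hφ.iterate i).measure_preimage hCm.nullMeasurableSet
    have hHitμ : ∀ i : ℕ, μ (Hit i) = μ A := fun i =>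
      (hφ.iterate i).measure_preimage hA.nullMeasurableSet
    calc (1 : ℝ≥0∞) = μ G := hG1.symm
      _ ≤ μ ((⋃ i ∈ Finset.range n, φ^[i] ⁻¹' C) ∪
          ⋃ i ∈ Finset.range (n - 1), Hit i) := measure_mono hcov
      _ ≤ μ (⋃ i ∈ Finset.range n, φ^[i] ⁻¹' C) +
          μ (⋃ i ∈ Finset.range (n - 1), Hit i) := measure_union_le _ _
      _ ≤ (∑ i ∈ Finset.range n, μ (φ^[i] ⁻¹' C)) +
          ∑ i ∈ Finset.range (n - 1), μ (Hit i) :=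
        add_le_add (measure_biUnion_finset_le _ _) (measure_biUnion_finset_le _ _)
      _ = (n : ℝ≥0∞) * μ C + ((n - 1 : ℕ) : ℝ≥0∞) * μ A := by
        simp [hCpre, hHitμ, Finset.sum_const, Finset.card_range, nsmul_eq_mul]

theorem rokhlin_lemma_circle (φ : UnitAddCircle → UnitAddCircle)
    (hφ : MeasurePreserving φ volume volume)
    (herg : ∀ S : Set UnitAddCircle, MeasurableSet S → φ ⁻¹' S = S →
      volume S = 0 ∨ volume S = 1)
    (n : ℕ) (hn : 1 ≤ n) (ε : ℝ) (hε : 0 < ε) :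
    ∃ B : Set UnitAddCircle, MeasurableSet B ∧
      (∀ i j : ℕ, i < n → j < n → i ≠ j → Disjoint (φ^[i] '' B) (φ^[j] '' B)) ∧
      ENNReal.ofReal (1 / n - ε) ≤ volume B := by
  classical
  -- a small set of positive measure
  set A : Set UnitAddCircle := Metric.closedBall (0 : UnitAddCircle) (ε / 4) with hAdef
  have hAm : MeasurableSet A := Metric.isClosed_closedBall.measurableSet
  have hAvol : volume A = ENNReal.ofReal (min 1 (2 * (ε / 4))) := by
    rw [hAdef, AddCircle.volume_closedBall]
  have hA0 : 0 < volume A := by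
    rw [hAvol]
    apply ENNReal.ofReal_pos.2
    have : 0 < 2 * (ε / 4) := by linarith
    exact lt_min one_pos this
  have hAε : (volume A).toReal ≤ ε := by
    rw [hAvol, ENNReal.toReal_ofReal (le_min zero_le_one (by linarith))]
    calc min 1 (2 * (ε / 4)) ≤ 2 * (ε / 4) := min_le_right _ _
      _ ≤ ε := by linarith
  haveI : IsProbabilityMeasure (volume : Measure UnitAddCircle) :=
    ⟨UnitAddCircle.measure_univ⟩
  obtain ⟨C, hCm, hCdisj, hCmeas⟩ := rokhlin_aux volume φ hφ herg n hn A hAm hA0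
  set B : Set UnitAddCircle := φ^[n - 1] ⁻¹' C with hBdef
  have hBm : MeasurableSet B := (hφ.iterate (n - 1)).measurable hCm
  have himg : ∀ i : ℕ, i < n → φ^[i] '' B ⊆ φ^[n - 1 - i] ⁻¹' C := by
    intro i hi y hy
    obtain ⟨b, hb, rfl⟩ := hy
    simp only [Set.mem_preimage]
    rw [← Function.iterate_add_apply, Nat.sub_add_cancel (by omega : i ≤ n - 1)]
    exact hb
  refine ⟨B, hBm, ?_, ?_⟩
  · intro i j hi hj hij
    have hne : n - 1 - i ≠ n - 1 - j := by omega
    rcases lt_or_gt_of_ne hne with h | h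
    · exact Set.disjoint_of_subset (himg i hi) (himg j hj)
        (hCdisj _ _ h (by omega))
    · exact Set.disjoint_of_subset (himg i hi) (himg j hj)
        ((hCdisj _ _ h (by omega)).symm)
  · have hBC : volume B = volume C :=
      (hφ.iterate (n - 1)).measure_preimage hCm.nullMeasurableSet
    have hCfin : volume C ≠ ⊤ := measure_ne_top _ _
    have hAfin : volume A ≠ ⊤ := measure_ne_top _ _
    set c := (volume C).toReal with hc
    set a := (volume A).toReal with ha
    have hreal : (1 : ℝ) ≤ n * c + ((n - 1 : ℕ) : ℝ) * a := by
      have hfin : (n : ℝ≥0∞) * volume C + ((n - 1 : ℕ) : ℝ≥0∞) * volume A ≠ ⊤ := by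
        apply ENNReal.add_ne_top.2
        constructor <;> exact ENNReal.mul_ne_top (ENNReal.natCast_ne_top _) (by assumption)
      have := ENNReal.toReal_mono hfin hCmeas
      rw [ENNReal.toReal_add (ENNReal.mul_ne_top (ENNReal.natCast_ne_top _) hCfin)
        (ENNReal.mul_ne_top (ENNReal.natCast_ne_top _) hAfin),
        ENNReal.toReal_mul, ENNReal.toReal_mul, ENNReal.toReal_natCast,
        ENNReal.toReal_natCast, ENNReal.toReal_one] at this
      exact this
    have hn1 : (1 : ℝ) ≤ n := by exact_mod_cast hn
    have ha0 : 0 ≤ a := ENNReal.toReal_nonneg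
    have hcast : ((n - 1 : ℕ) : ℝ) = (n : ℝ) - 1 := by
      push_cast [Nat.cast_sub hn]
      ring
    have hkey : 1 / (n : ℝ) - ε ≤ c := by
      rw [hcast] at hreal
      have hnpos : (0:ℝ) < n := by linarith
      rw [sub_le_iff_le_add, div_le_iff₀ hnpos]
      nlinarith [hAε, hε.le, ha0,
        mul_nonneg (by linarith : (0:ℝ) ≤ (n:ℝ) - 1) (by linarith : (0:ℝ) ≤ ε - a)]
    calc ENNReal.ofReal (1 / n - ε) ≤ ENNReal.ofReal c := ENNReal.ofReal_le_ofReal hkey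
      _ = volume C := ENNReal.ofReal_toReal hCfin
      _ = volume B := hBC.symm
end

section
/- Let λ ≥ 2 and m ≥ 1 be integers and let n ≥ 1. Then the Lebesgue measure of the set {x ∈ [0,1) : for every i with 0 ≤ i ≤ n−1, the fractional part of λ^i·x is at least λ^{−m}} is at most (1 − λ^{−m})^{n/m} ≤ exp(−λ^{−m}·n/m). -/
/-!
Keep only the conditions with `i = j * m`, `j < ⌈n / m⌉`. For `b = l ^ m`, the inequality
`b⁻¹ ≤ fract (b ^ j * x)` says that the `(j + 1)`-st base-`b` digit of `x` is nonzero. The points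
of `[0, 1)` whose first `k + 1` digits are nonzero are covered by the `b - 1` images of those whose
first `k` digits are nonzero under `y ↦ (a + y) / b`, `1 ≤ a < b`, so they have measure at most
`(1 - b⁻¹) ^ (k + 1)`. The exponential bound is `1 - t ≤ exp (-t)`.
-/

open MeasureTheory Set
open scoped ENNReal

theorem Int.fract_intCast_mul_fract {R : Type*} [Ring R] [LinearOrder R] [IsOrderedRing R]
    [FloorRing R] (c : ℤ) (z : R) : Int.fract ((c : R) * Int.fract z) = Int.fract ((c : R) * z) :=
  Int.fract_eq_fract.2 ⟨-(c * ⌊z⌋), by rw [Int.fract, mul_sub]; push_cast; abel⟩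

theorem Real.volume_preimage_mul_sub {c : ℝ} (hc : c ≠ 0) (a : ℝ) (s : Set ℝ) :
    volume ((fun x => c * x - a) ⁻¹' s) = ENNReal.ofReal |c⁻¹| * volume s := by
  rw [show (fun x => c * x - a) ⁻¹' s = (c * ·) ⁻¹' ((· + -a) ⁻¹' s) from rfl,
    Real.volume_preimage_mul_left hc, measure_preimage_add_right]

theorem Real.one_sub_rpow_le_exp_neg_mul {ε t : ℝ} (hε : ε ≤ 1) (ht : 0 ≤ t) :
    (1 - ε) ^ t ≤ Real.exp (-ε * t) := by
  rw [Real.exp_mul]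
  exact Real.rpow_le_rpow (by linarith) (Real.one_sub_le_exp_neg ε) ht

def nonzeroDigitsSet (b k : ℕ) : Set ℝ :=
  {x | x ∈ Ico 0 1 ∧ ∀ j < k, (b : ℝ)⁻¹ ≤ Int.fract ((b : ℝ) ^ j * x)}

theorem nonzeroDigitsSet_succ_subset {b : ℕ} (hb : 0 < b) (k : ℕ) :
    nonzeroDigitsSet b (k + 1) ⊆
      ⋃ a ∈ Finset.Ico 1 b, (fun x => (b : ℝ) * x - a) ⁻¹' nonzeroDigitsSet b k := by
  rintro x ⟨⟨hx0, hx1⟩, hdigits⟩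
  have hb' : (0 : ℝ) < b := by exact_mod_cast hb
  have hbx : 0 ≤ (b : ℝ) * x := by positivity
  have hfirst : (b : ℝ)⁻¹ ≤ x := by
    simpa [Int.fract_eq_self.2 ⟨hx0, hx1⟩] using hdigits 0 k.succ_pos
  simp only [mem_iUnion, Finset.mem_Ico, mem_preimage]
  refine ⟨⌊(b : ℝ) * x⌋₊, ⟨?_, ?_⟩, ?_⟩
  · rw [Nat.one_le_floor_iff]
    rwa [inv_le_iff_one_le_mul₀' hb'] at hfirst
  · rw [Nat.floor_lt hbx]
    nlinarith
  · rw [natCast_floor_eq_intCast_floor hbx, Int.self_sub_floor]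
    refine ⟨⟨Int.fract_nonneg _, Int.fract_lt_one _⟩, fun j hj => ?_⟩
    have hshift := Int.fract_intCast_mul_fract ((b : ℤ) ^ j) ((b : ℝ) * x)
    push_cast at hshift
    rw [hshift, ← mul_assoc, ← pow_succ]
    exact hdigits (j + 1) (by omega)

theorem volume_nonzeroDigitsSet_le {b : ℕ} (hb : 0 < b) (k : ℕ) :
    volume (nonzeroDigitsSet b k) ≤ ENNReal.ofReal (1 - (b : ℝ)⁻¹) ^ k := by
  induction k with
  | zero => simpa using measure_mono (μ := volume) fun x (hx : x ∈ nonzeroDigitsSet b 0) => hx.1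
  | succ k ih =>
    have hb' : (b : ℝ) ≠ 0 := by positivity
    have hcount :
        ((b - 1 : ℕ) : ℝ≥0∞) * ENNReal.ofReal (b : ℝ)⁻¹ = ENNReal.ofReal (1 - (b : ℝ)⁻¹) := by
      rw [← ENNReal.ofReal_natCast, ← ENNReal.ofReal_mul (by positivity), Nat.cast_sub hb]
      field_simp
      simp
    calc volume (nonzeroDigitsSet b (k + 1))
        ≤ ∑ a ∈ Finset.Ico 1 b, volume ((fun x => (b : ℝ) * x - a) ⁻¹' nonzeroDigitsSet b k) :=
          (measure_mono (nonzeroDigitsSet_succ_subset hb k)).trans (measure_biUnion_finset_le _ _)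
      _ = (b - 1 : ℕ) * (ENNReal.ofReal (b : ℝ)⁻¹ * volume (nonzeroDigitsSet b k)) := by
          simp [Real.volume_preimage_mul_sub hb']
      _ ≤ (b - 1 : ℕ) * (ENNReal.ofReal (b : ℝ)⁻¹ * ENNReal.ofReal (1 - (b : ℝ)⁻¹) ^ k) := by
          gcongr
      _ = ENNReal.ofReal (1 - (b : ℝ)⁻¹) ^ (k + 1) := by
          rw [← mul_assoc, hcount, pow_succ']

theorem measure_no_small_fract_general (l m : ℕ) (hl : 2 ≤ l) (hm : 1 ≤ m) (n : ℕ) :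
    volume {x : ℝ | x ∈ Set.Ico (0 : ℝ) 1 ∧
        ∀ i : ℕ, i < n → (l : ℝ) ^ (-(m : ℤ)) ≤ Int.fract ((l : ℝ) ^ i * x)}
      ≤ ENNReal.ofReal ((1 - (l : ℝ) ^ (-(m : ℤ))) ^ ((n : ℝ) / m)) ∧
    (1 - (l : ℝ) ^ (-(m : ℤ))) ^ ((n : ℝ) / m)
      ≤ Real.exp (-(l : ℝ) ^ (-(m : ℤ)) * n / m) := by
  have hlm : 0 < l ^ m := pow_pos (by omega) m
  have hε : (l : ℝ) ^ (-(m : ℤ)) = ((l ^ m : ℕ) : ℝ)⁻¹ := by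
    rw [zpow_neg, zpow_natCast, Nat.cast_pow]
  have hε1 : ((l ^ m : ℕ) : ℝ)⁻¹ ≤ 1 := inv_le_one_of_one_le₀ (by exact_mod_cast hlm)
  set k := ⌈(n : ℝ) / m⌉₊
  have hsub : {x : ℝ | x ∈ Ico (0 : ℝ) 1 ∧
      ∀ i : ℕ, i < n → (l : ℝ) ^ (-(m : ℤ)) ≤ Int.fract ((l : ℝ) ^ i * x)} ⊆
      nonzeroDigitsSet (l ^ m) k := by
    refine fun x ⟨hx, hdigits⟩ => ⟨hx, fun j hj => ?_⟩
    have hjm : j * m < n := by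
      rw [Nat.lt_ceil, lt_div_iff₀ (by positivity)] at hj
      exact_mod_cast hj
    rw [← hε, Nat.cast_pow, ← pow_mul, mul_comm m]
    exact hdigits _ hjm
  have hε0 : 0 ≤ 1 - ((l ^ m : ℕ) : ℝ)⁻¹ := sub_nonneg.2 hε1
  refine ⟨(measure_mono hsub).trans ?_, ?_⟩ <;> rw [hε]
  · calc volume (nonzeroDigitsSet (l ^ m) k)
        ≤ ENNReal.ofReal (1 - ((l ^ m : ℕ) : ℝ)⁻¹) ^ k := volume_nonzeroDigitsSet_le hlm k
      _ = ENNReal.ofReal ((1 - ((l ^ m : ℕ) : ℝ)⁻¹) ^ (k : ℝ)) := by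
          rw [Real.rpow_natCast, ENNReal.ofReal_pow hε0]
      _ ≤ _ := ENNReal.ofReal_le_ofReal <| Real.rpow_le_rpow_of_exponent_ge' hε0
          (sub_le_self _ (by positivity)) (by positivity) (Nat.le_ceil _)
  · rw [mul_div_assoc]
    exact Real.one_sub_rpow_le_exp_neg_mul hε1 (by positivity)

theorem measure_no_small_fract (l m : ℕ) (hl : 2 ≤ l) (hm : 1 ≤ m) (n : ℕ) (hn : 1 ≤ n) :
    volume {x : ℝ | x ∈ Set.Ico (0 : ℝ) 1 ∧
        ∀ i : ℕ, i < n → (l : ℝ) ^ (-(m : ℤ)) ≤ Int.fract ((l : ℝ) ^ i * x)}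
      ≤ ENNReal.ofReal ((1 - (l : ℝ) ^ (-(m : ℤ))) ^ ((n : ℝ) / m)) ∧
    (1 - (l : ℝ) ^ (-(m : ℤ))) ^ ((n : ℝ) / m)
      ≤ Real.exp (-(l : ℝ) ^ (-(m : ℤ)) * n / m) :=
  measure_no_small_fract_general l m hl hm n
end

section
/- Let λ ≥ 2, m ≥ 1 and t ≥ m be integers. Then there exists a measurable set A ⊆ 𝕋 (a finite union of intervals) with A ∩ λ·A = ∅ and μ(A) ≥ 1/2 − (1/2)·(1 − λ^{−m})^{(2t+1)/m} − (1/2)·λ^{−m}. -/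
/-!
Let `f x = l • x` and let `H` be the arc of length `l⁻ᵐ` around `0`. Take for `A` the points whose
first visit to `H` under `f` happens at an odd time `≤ 2t + 1`. If `x` first visits `H` at time
`j + 1`, then `f x` first visits it at time `j`, so `A` and `f '' A` are disjoint. As `f` preserves
measure, the first visits at times `2i` and `2i + 1` differ in measure by that of a subset of `H`,
and these subsets are disjoint, so `2 μ A + μ H` bounds the measure of the points visiting `H`
before time `2t + 2`. Visits at the times `0, m, 2m, …` are independent events of probability
`l⁻ᵐ`, so the remaining points have measure at most `(1 - l⁻ᵐ) ^ (⌊(2t + 1) / m⌋ + 1)`.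
-/

open MeasureTheory Set Function Metric

section FirstHit

variable {α : Type*} (f : α → α) (H : Set α)

def firstHitSet (n : ℕ) : Set α := {x | f^[n] x ∈ H ∧ ∀ k < n, f^[k] x ∉ H}

def avoidSet (n : ℕ) : Set α := {x | ∀ k < n, f^[k] x ∉ H}

def oddFirstHitSet (n : ℕ) : Set α := ⋃ k ∈ Finset.range n, firstHitSet f H (2 * k + 1)

@[simp]
lemma firstHitSet_zero : firstHitSet f H 0 = H := by
  simp [firstHitSet]

@[simp]
lemma avoidSet_zero : avoidSet f H 0 = univ := by
  simp [avoidSet]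

lemma firstHitSet_succ (n : ℕ) : firstHitSet f H (n + 1) = f ⁻¹' firstHitSet f H n \ H := by
  ext x
  simp only [firstHitSet, mem_sdiff, mem_preimage, mem_ofPred_eq, iterate_succ_apply,
    Nat.forall_lt_succ_left, iterate_zero, id]
  tauto

lemma avoidSet_succ (n : ℕ) : avoidSet f H (n + 1) = f ⁻¹' avoidSet f H n \ H := by
  ext x
  simp only [avoidSet, mem_sdiff, mem_preimage, mem_ofPred_eq, iterate_succ_apply,
    Nat.forall_lt_succ_left, iterate_zero, id]
  tauto

lemma pairwise_disjoint_firstHitSet : Pairwise (Disjoint on firstHitSet f H) := by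
  intro i j hij
  rcases hij.lt_or_gt with h | h
  · exact disjoint_left.2 fun x hi hj => hj.2 i h hi.1
  · exact disjoint_left.2 fun x hi hj => hi.2 j h hj.1

lemma compl_avoidSet (n : ℕ) :
    (avoidSet f H n)ᶜ = ⋃ k ∈ Finset.range n, firstHitSet f H k := by
  classical
  ext x
  simp only [avoidSet, mem_compl_iff, mem_ofPred_eq, not_forall, not_not, mem_iUnion,
    Finset.mem_range, exists_prop]
  constructor
  · rintro ⟨k, hk, hx⟩
    have hex : ∃ k, f^[k] x ∈ H := ⟨k, hx⟩
    exact ⟨Nat.find hex, (Nat.find_min' hex hx).trans_lt hk, Nat.find_spec hex,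
      fun i hi => Nat.find_min hex hi⟩
  · rintro ⟨k, hk, hx, -⟩
    exact ⟨k, hk, hx⟩

lemma avoidSet_subset_avoidSet_iterate {m n k : ℕ} (h : ∀ j < k, m * j < n) :
    avoidSet f H n ⊆ avoidSet f^[m] H k := fun x hx j hj => by
  rw [← iterate_mul]
  exact hx _ (h j hj)

lemma disjoint_oddFirstHitSet_image (n : ℕ) :
    Disjoint (oddFirstHitSet f H n) (f '' oddFirstHitSet f H n) := by
  rw [disjoint_left]
  rintro _ hfx ⟨x, hx, rfl⟩
  simp only [oddFirstHitSet, mem_iUnion] at hx hfx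
  obtain ⟨i, -, hx⟩ := hx
  obtain ⟨j, -, hfx⟩ := hfx
  rw [firstHitSet_succ] at hx
  exact (pairwise_disjoint_firstHitSet f H (by omega : 2 * j + 1 ≠ 2 * i)).ne_of_mem hfx hx.1 rfl

lemma sum_range_two_mul {M : Type*} [AddCommMonoid M] (g : ℕ → M) (n : ℕ) :
    ∑ k ∈ Finset.range (2 * n), g k = ∑ i ∈ Finset.range n, (g (2 * i) + g (2 * i + 1)) := by
  induction n with
  | zero => simp
  | succ n ih =>
    rw [mul_add, mul_one, Finset.sum_range_succ, Finset.sum_range_succ, Finset.sum_range_succ, ih,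
      add_assoc]

variable [MeasurableSpace α] {μ : Measure α}

lemma measurableSet_firstHitSet (hf : Measurable f) (hH : MeasurableSet H) (n : ℕ) :
    MeasurableSet (firstHitSet f H n) := by
  induction n with
  | zero => simpa using hH
  | succ n ih => simpa only [firstHitSet_succ] using (hf ih).diff hH

lemma measurableSet_avoidSet (hf : Measurable f) (hH : MeasurableSet H) (n : ℕ) :
    MeasurableSet (avoidSet f H n) := by
  induction n with
  | zero => simp
  | succ n ih => simpa only [avoidSet_succ] using (hf ih).diff hH

lemma measurableSet_oddFirstHitSet (hf : Measurable f) (hH : MeasurableSet H) (n : ℕ) :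
    MeasurableSet (oddFirstHitSet f H n) :=
  Finset.measurableSet_biUnion _ fun _ _ => measurableSet_firstHitSet f H hf hH _

variable {f H}

lemma measure_firstHitSet_succ_add (hf : MeasurePreserving f μ μ) (hH : MeasurableSet H)
    (n : ℕ) :
    μ (firstHitSet f H (n + 1)) + μ (f ⁻¹' firstHitSet f H n ∩ H) = μ (firstHitSet f H n) := by
  rw [firstHitSet_succ, add_comm, measure_inter_add_sdiff _ hH,
    hf.measure_preimage (measurableSet_firstHitSet f H hf.measurable hH n).nullMeasurableSet]

lemma measure_iUnion_firstHitSet_le (hf : MeasurePreserving f μ μ) (hH : MeasurableSet H)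
    (n : ℕ) :
    μ (⋃ k ∈ Finset.range (2 * n), firstHitSet f H k) ≤ 2 * μ (oddFirstHitSet f H n) + μ H := by
  have hmeas := measurableSet_firstHitSet f H hf.measurable hH
  have hdisj := pairwise_disjoint_firstHitSet f H
  have hodd : μ (oddFirstHitSet f H n) = ∑ i ∈ Finset.range n, μ (firstHitSet f H (2 * i + 1)) :=
    measure_biUnion_finset ((hdisj.comp_of_injective fun a b h => by omega).set_pairwise _)
      fun _ _ => hmeas _
  have hentry : ∑ i ∈ Finset.range n, μ (f ⁻¹' firstHitSet f H (2 * i) ∩ H) ≤ μ H := by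
    rw [← measure_biUnion_finset]
    · exact measure_mono (iUnion₂_subset fun _ _ => inter_subset_right)
    · refine ((hdisj.comp_of_injective fun a b h => by omega).set_pairwise _).mono'
        fun i j h => (h.preimage f).mono inter_subset_left inter_subset_left
    · exact fun i _ => (hf.measurable (hmeas _)).inter hH
  calc μ (⋃ k ∈ Finset.range (2 * n), firstHitSet f H k)
      = ∑ i ∈ Finset.range n,
          (μ (firstHitSet f H (2 * i)) + μ (firstHitSet f H (2 * i + 1))) := by
        rw [measure_biUnion_finset (hdisj.set_pairwise _) fun _ _ => hmeas _, sum_range_two_mul]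
    _ = ∑ i ∈ Finset.range n, (2 * μ (firstHitSet f H (2 * i + 1))
          + μ (f ⁻¹' firstHitSet f H (2 * i) ∩ H)) := by
        refine Finset.sum_congr rfl fun i _ => ?_
        rw [← measure_firstHitSet_succ_add hf hH]
        ring
    _ ≤ 2 * μ (oddFirstHitSet f H n) + μ H := by
        rw [Finset.sum_add_distrib, ← Finset.mul_sum, hodd]
        gcongr

lemma one_le_two_mul_measure_oddFirstHitSet_add [IsProbabilityMeasure μ]
    (hf : MeasurePreserving f μ μ) (hH : MeasurableSet H) (n : ℕ) :
    1 ≤ 2 * μ (oddFirstHitSet f H n) + μ H + μ (avoidSet f H (2 * n)) :=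
  calc 1 = μ ((avoidSet f H (2 * n))ᶜ ∪ avoidSet f H (2 * n)) := by
        rw [compl_union_self, measure_univ]
    _ ≤ μ (avoidSet f H (2 * n))ᶜ + μ (avoidSet f H (2 * n)) := measure_union_le _ _
    _ ≤ _ := by
        rw [compl_avoidSet]
        gcongr
        exact measure_iUnion_firstHitSet_le hf hH n

lemma measure_avoidSet_of_indep [IsProbabilityMeasure μ] (hf : MeasurePreserving f μ μ)
    (hH : MeasurableSet H) (hind : ∀ B, MeasurableSet B → μ (f ⁻¹' B ∩ H) = μ H * μ B)
    (n : ℕ) : μ (avoidSet f H n) = (1 - μ H) ^ n := by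
  induction n with
  | zero => simp
  | succ n ih =>
    have hB := measurableSet_avoidSet f H hf.measurable hH n
    have hsplit := measure_inter_add_sdiff (μ := μ) (f ⁻¹' avoidSet f H n) hH
    rw [hind _ hB, hf.measure_preimage hB.nullMeasurableSet, add_comm] at hsplit
    rw [avoidSet_succ, ENNReal.eq_sub_of_add_eq (by finiteness) hsplit, pow_succ', ← ih,
      ENNReal.sub_mul fun _ _ => measure_ne_top _ _, one_mul]

end FirstHit

section UnitAddCircle

open AddCircle

open scoped Pointwise

instance : IsProbabilityMeasure (volume : Measure UnitAddCircle) :=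
  ⟨by rw [AddCircle.measure_univ, ENNReal.ofReal_one]⟩

lemma volume_ball_unitAddCircle {N : ℕ} (hN : 0 < N) (x : UnitAddCircle) :
    volume (ball x (1 / (2 * N))) = ENNReal.ofReal (N : ℝ)⁻¹ := by
  have hN' : (1 : ℝ) ≤ N := by exact_mod_cast hN
  have hr : 2 * (1 / (2 * (N : ℝ))) = (N : ℝ)⁻¹ := by field_simp
  rw [← measure_congr closedBall_ae_eq_ball, volume_closedBall, hr,
    min_eq_right (inv_le_one_of_one_le₀ hN')]

-- Preimages under `N •` are invariant under rotation by `1 / N`, and the ball of radius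
-- `1 / (2N)` is a fundamental domain for these rotations.
lemma volume_preimage_zsmul_inter_ball {N : ℕ} (hN : 0 < N) {B : Set UnitAddCircle}
    (hB : MeasurableSet B) :
    volume ((fun x => (N : ℤ) • x) ⁻¹' B ∩ ball 0 (1 / (2 * N))) =
      volume (ball (0 : UnitAddCircle) (1 / (2 * N))) * volume B := by
  set u : UnitAddCircle := ((1 / N : ℝ) : UnitAddCircle)
  have hu : addOrderOf u = N := addOrderOf_period_div hN
  have hNu : N • u = 0 := hu ▸ addOrderOf_nsmul_eq_zero u
  have hinv : u +ᵥ (fun x => (N : ℤ) • x) ⁻¹' B = (fun x => (N : ℤ) • x) ⁻¹' B := by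
    ext x
    simp [mem_vadd_set_iff_neg_vadd_mem, smul_add, hNu]
  have hfund := volume_of_add_preimage_eq _ (ball 0 (1 / (2 * N))) u 0
    (addOrderOf_pos_iff.mp (hu ▸ hN)) (by rw [hinv]; exact Filter.EventuallyEq.rfl)
    (by rw [hu]; exact Filter.EventuallyEq.rfl)
  rw [(Measure.measurePreserving_zsmul volume (by omega)).measure_preimage hB.nullMeasurableSet,
    hu] at hfund
  rw [volume_ball_unitAddCircle hN, hfund, nsmul_eq_mul, ← mul_assoc,
    ENNReal.ofReal_inv_of_pos (by positivity), ENNReal.ofReal_natCast,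
    ENNReal.inv_mul_cancel (by positivity) (by finiteness), one_mul]

end UnitAddCircle

lemma pow_div_add_one_le_rpow_div {x : ℝ} (hx0 : 0 ≤ x) (hx1 : x ≤ 1) (n m : ℕ) :
    x ^ (n / m + 1) ≤ x ^ ((n : ℝ) / m) := by
  rw [← Real.rpow_natCast]
  refine Real.rpow_le_rpow_of_exponent_ge' hx0 hx1 (by positivity) ?_
  rw [Nat.cast_add_one, ← Nat.floor_div_eq_div (K := ℝ)]
  exact (Nat.lt_floor_add_one _).le

lemma ofReal_half_sub_le_of_one_le {a : ENNReal} {c y : ℝ} (hc : 0 ≤ c) (hy : 0 ≤ y)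
    (h : 1 ≤ 2 * a + ENNReal.ofReal c + ENNReal.ofReal y) :
    ENNReal.ofReal (1 / 2 - 1 / 2 * y - 1 / 2 * c) ≤ a := by
  rcases eq_or_ne a ⊤ with rfl | ha
  · exact le_top
  rw [← ENNReal.ofReal_toReal ha, ← ENNReal.ofReal_ofNat 2, ← ENNReal.ofReal_mul (by norm_num),
    ← ENNReal.ofReal_add (by positivity) hc, ← ENNReal.ofReal_add (by positivity) hy,
    ENNReal.one_le_ofReal] at h
  rw [← ENNReal.ofReal_toReal ha]
  exact ENNReal.ofReal_le_ofReal (by linarith)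

theorem exists_set_disjoint_dilate_quantitative_general (l m t : ℕ)
    (hl : 2 ≤ l) :
    ∃ A : Set UnitAddCircle, MeasurableSet A ∧
      A ∩ ((fun x => (l : ℤ) • x) '' A) = ∅ ∧
      ENNReal.ofReal (1 / 2
          - (1 / 2) * (1 - (l : ℝ) ^ (-(m : ℤ))) ^ (((2 * t + 1 : ℕ) : ℝ) / m)
          - (1 / 2) * (l : ℝ) ^ (-(m : ℤ)))
        ≤ volume A := by
  set f : UnitAddCircle → UnitAddCircle := fun x => (l : ℤ) • x
  set H : Set UnitAddCircle := ball 0 (1 / (2 * (l ^ m : ℕ)))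
  set c : ℝ := (l : ℝ) ^ (-(m : ℤ))
  have hN : 0 < l ^ m := by positivity
  have hf : MeasurePreserving f := Measure.measurePreserving_zsmul _ (by omega)
  have hc0 : 0 ≤ c := by positivity
  have hc1 : c ≤ 1 := zpow_le_one_of_nonpos₀ (by exact_mod_cast (by omega : 1 ≤ l)) (by omega)
  have hH : volume H = ENNReal.ofReal c := by
    rw [volume_ball_unitAddCircle hN, Nat.cast_pow, ← zpow_natCast, ← zpow_neg]
  have hiter : f^[m] = fun x => ((l ^ m : ℕ) : ℤ) • x := by
    rw [smul_iterate]
    push_cast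
    rfl
  have havoid : volume (avoidSet f H (2 * (t + 1))) ≤
      ENNReal.ofReal ((1 - c) ^ ((2 * t + 1) / m + 1)) := by
    rw [ENNReal.ofReal_pow (by linarith), ENNReal.ofReal_sub _ hc0, ENNReal.ofReal_one, ← hH,
      ← measure_avoidSet_of_indep (hf.iterate m) measurableSet_ball
        (by rw [hiter]; exact fun B hB => volume_preimage_zsmul_inter_ball hN hB)]
    refine measure_mono (avoidSet_subset_avoidSet_iterate f H fun j hj => ?_)
    calc m * j ≤ m * ((2 * t + 1) / m) := Nat.mul_le_mul_left m (by omega)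
      _ ≤ 2 * t + 1 := Nat.mul_div_le _ _
      _ < 2 * (t + 1) := by omega
  refine ⟨oddFirstHitSet f H (t + 1),
    measurableSet_oddFirstHitSet f H hf.measurable measurableSet_ball _,
    disjoint_iff_inter_eq_empty.mp (disjoint_oddFirstHitSet_image f H _), ?_⟩
  refine ofReal_half_sub_le_of_one_le hc0 (by positivity) ?_
  calc 1 ≤ _ := one_le_two_mul_measure_oddFirstHitSet_add hf measurableSet_ball (t + 1)
    _ ≤ _ := by
      rw [hH]
      gcongr
      exact havoid.trans (ENNReal.ofReal_le_ofReal
        (pow_div_add_one_le_rpow_div (by linarith) (by linarith) _ _))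

theorem exists_set_disjoint_dilate_quantitative (l m t : ℕ)
    (hl : 2 ≤ l) (hm : 1 ≤ m) (ht : m ≤ t) :
    ∃ A : Set UnitAddCircle, MeasurableSet A ∧
      A ∩ ((fun x => (l : ℤ) • x) '' A) = ∅ ∧
      ENNReal.ofReal (1 / 2
          - (1 / 2) * (1 - (l : ℝ) ^ (-(m : ℤ))) ^ (((2 * t + 1 : ℕ) : ℝ) / m)
          - (1 / 2) * (l : ℝ) ^ (-(m : ℤ)))
        ≤ volume A :=
  exists_set_disjoint_dilate_quantitative_general l m t hl
end

section
/- Let p be a prime, let λ₁, …, λ_k (k ≥ 2) be integers with λ₁ and λ₂ not divisible by p, let A ⊆ ℤ/pℤ be nonempty, and let K > 0. If |λ₁·A + λ₂·A + … + λ_k·A| ≤ K·|A|, then |A + A| ≤ K²·|A|. -/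
/-!
Dilation by an integer that is a unit mod `p` is injective, so `B = λ₁·A` and `C = λ₂·A` satisfy
`|B + B| = |A + A|` and `|C| = |A|`, while `|B + C| ≤ |λ₁·A + ⋯ + λ_k·A| ≤ K|A|` because adding
nonempty sets cannot shrink a sumset. Ruzsa's triangle inequality `|B + B||C| ≤ |B + C||C + B|`
then gives `|A + A||A| ≤ K²|A|²`.
-/

open Pointwise

namespace Finset

variable {α ι : Type*} [DecidableEq α]

theorem sum_nonempty [AddCommMonoid α] {s : Finset ι} {f : ι → Finset α}
    (hf : ∀ i, (f i).Nonempty) : (∑ i ∈ s, f i).Nonempty := by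
  classical
  induction s using Finset.induction_on with
  | empty => simp
  | insert i s hi ih => rw [sum_insert hi]; exact (hf i).add ih

theorem card_add_le_card_sum [AddCancelCommMonoid α] [Fintype ι] {f : ι → Finset α}
    (hf : ∀ i, (f i).Nonempty) {i j : ι} (hij : i ≠ j) : #(f i + f j) ≤ #(∑ k, f k) := by
  classical
  rw [← add_sum_erase _ f (mem_univ i), ← add_sum_erase _ f (mem_erase.2 ⟨hij.symm, mem_univ j⟩),
    ← add_assoc]
  exact card_le_card_add_right (sum_nonempty hf)

theorem card_add_self_mul_card_le [AddCommGroup α] (s t : Finset α) :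
    #(s + s) * #t ≤ #(s + t) ^ 2 := by
  simpa [add_comm t s, sq] using ruzsa_triangle_inequality_add_add_add s t s

theorem image_zsmul_add [AddCommGroup α] (s t : Finset α) (n : ℤ) :
    (s + t).image (n • ·) = s.image (n • ·) + t.image (n • ·) :=
  image_add (DistribSMul.toAddMonoidHom α n)

theorem card_image_zsmul {R : Type*} [Ring R] [NoZeroDivisors R] [DecidableEq R] (s : Finset R)
    {n : ℤ} (hn : (n : R) ≠ 0) : #(s.image (n • ·)) = #s :=
  card_image_of_injective _ (by simpa only [zsmul_eq_mul] using mul_right_injective₀ hn)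

end Finset

open Finset

theorem ruzsa_doubling_from_dilates (p : ℕ) (hp : p.Prime)
    (k : ℕ) (hk : 2 ≤ k) (l : Fin k → ℤ)
    (h₁ : ¬ (p : ℤ) ∣ l ⟨0, by omega⟩)
    (h₂ : ¬ (p : ℤ) ∣ l ⟨1, by omega⟩)
    (A : Finset (ZMod p)) (hA : A.Nonempty) (K : ℝ)
    (hsum : ((∑ i, A.image fun a => l i • a).card : ℝ) ≤ K * A.card) :
    ((A + A).card : ℝ) ≤ K ^ 2 * A.card := by
  have : Fact p.Prime := ⟨hp⟩
  let B : Finset (ZMod p) := A.image (l ⟨0, by omega⟩ • ·)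
  let C : Finset (ZMod p) := A.image (l ⟨1, by omega⟩ • ·)
  have hB : #(B + B) = #(A + A) := by
    rw [← image_zsmul_add, card_image_zsmul _ (mt (ZMod.intCast_zmod_eq_zero_iff_dvd _ _).1 h₁)]
  have hC : #C = #A := card_image_zsmul _ (mt (ZMod.intCast_zmod_eq_zero_iff_dvd _ _).1 h₂)
  have hBC : (#(B + C) : ℝ) ≤ K * #A :=
    le_trans (mod_cast card_add_le_card_sum (f := fun i => A.image (l i • ·))
      (fun i => hA.image _) (i := ⟨0, by omega⟩) (j := ⟨1, by omega⟩) (by simp)) hsum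
  have hRuzsa : (#(A + A) : ℝ) * #A ≤ (K * #A) ^ 2 := by
    calc (#(A + A) : ℝ) * #A = #(B + B) * #C := by rw [hB, hC]
      _ ≤ #(B + C) ^ 2 := mod_cast card_add_self_mul_card_le B C
      _ ≤ (K * #A) ^ 2 := pow_le_pow_left₀ (by positivity) hBC 2
  have hApos : (0 : ℝ) < #A := mod_cast hA.card_pos
  exact le_of_mul_le_mul_right (by linarith) hApos
end

section
/- (Hamidoune–Plagne.) Let λ be an integer with λ ∉ {−1, 0, 1}. Then every finite nonempty set A ⊆ ℤ satisfies |A + λ·A| ≥ 3·|A| − 2. -/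
/-!
Let `m = |λ| ≥ 2`. Modulo `m` every element `a + λb` of `A + λ·A` is congruent to `a`, so if `A`
meets `k` residue classes `A₁, …, A_k`, the sets `Aᵢ + λ·A` are disjoint and Cauchy–Davenport gives
`|A + λ·A| ≥ ∑ (|Aᵢ| + |A| - 1) = |A| + k(|A| - 1)`, which is enough when `k ≥ 2`. If `k = 1`, then
`A = m·B + r`, `A + λ·A` is an affine image of `B + λ·B`, and `B` has at most half the diameter
of `A`, so induction on the diameter finishes the proof.
-/

open Pointwise Finset

variable {l m : ℤ}

theorem Int.add_mul_emod_of_dvd (hml : m ∣ l) (a b : ℤ) : (a + l * b) % m = a % m := by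
  obtain ⟨k, rfl⟩ := hml
  rw [mul_assoc, Int.add_mul_emod_self_left]

theorem card_add_card_residues_mul_le_card_add_image_mul (hl : l ≠ 0) (hml : m ∣ l)
    (A : Finset ℤ) :
    #A + #(A.image (· % m)) * (#A - 1) ≤ #(A + A.image (l * ·)) := by
  set S := A + A.image (l * ·)
  set R := A.image (· % m)
  have hmaps : (S : Set ℤ).MapsTo (· % m) R := by
    rintro _ hx
    obtain ⟨a, ha, _, hb, rfl⟩ := mem_add.1 hx
    obtain ⟨b, -, rfl⟩ := mem_image.1 hb
    show (a + l * b) % m ∈ R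
    rw [Int.add_mul_emod_of_dvd hml]
    exact mem_image_of_mem _ ha
  have hfiber : ∀ r ∈ R, #{a ∈ A | a % m = r} + (#A - 1) ≤ #{x ∈ S | x % m = r} := by
    intro r hr
    obtain ⟨a, ha, rfl⟩ := mem_image.1 hr
    have hsub : {b ∈ A | b % m = a % m} + A.image (l * ·) ⊆ {x ∈ S | x % m = a % m} := by
      intro x hx
      obtain ⟨b, hb, _, hlc, rfl⟩ := mem_add.1 hx
      obtain ⟨c, hc, rfl⟩ := mem_image.1 hlc
      rw [mem_filter] at hb ⊢
      exact ⟨add_mem_add hb.1 (mem_image_of_mem _ hc), by rw [Int.add_mul_emod_of_dvd hml, hb.2]⟩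
    have hcd := cauchy_davenport_add_of_linearOrder_isCancelAdd
      (s := {b ∈ A | b % m = a % m}) ⟨a, by simp [ha]⟩ (Nonempty.image ⟨a, ha⟩ (l * ·))
    rw [card_image_of_injective _ (mul_right_injective₀ hl)] at hcd
    have := card_le_card hsub
    have := card_pos.2 ⟨a, ha⟩
    omega
  calc #A + #R * (#A - 1) = ∑ r ∈ R, (#{a ∈ A | a % m = r} + (#A - 1)) := by
        rw [sum_add_distrib, sum_const, smul_eq_mul,
          ← card_eq_sum_card_fiberwise (fun a ha => mem_image_of_mem _ ha)]
    _ ≤ ∑ r ∈ R, #{x ∈ S | x % m = r} := sum_le_sum hfiber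
    _ = #S := (card_eq_sum_card_fiberwise hmaps).symm

theorem add_image_mul_image_affine (r : ℤ) (B : Finset ℤ) :
    B.image (m * · + r) + (B.image (m * · + r)).image (l * ·)
      = (B + B.image (l * ·)).image (m * · + (r + l * r)) := by
  ext x
  simp only [mem_add, mem_image]
  constructor
  · rintro ⟨_, ⟨a, ha, rfl⟩, _, ⟨_, ⟨b, hb, rfl⟩, rfl⟩, rfl⟩
    exact ⟨a + l * b, ⟨a, ha, l * b, ⟨b, hb, rfl⟩, rfl⟩, by ring⟩
  · rintro ⟨_, ⟨a, ha, _, ⟨b, hb, rfl⟩, rfl⟩, rfl⟩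
    exact ⟨m * a + r, ⟨a, ha, rfl⟩, l * (m * b + r), ⟨m * b + r, ⟨b, hb, rfl⟩, rfl⟩, by ring⟩

theorem card_add_image_mul_image_affine (hm : m ≠ 0) (r : ℤ) (B : Finset ℤ) :
    #(B.image (m * · + r) + (B.image (m * · + r)).image (l * ·)) = #(B + B.image (l * ·)) := by
  rw [add_image_mul_image_affine, card_image_of_injective]
  exact (add_left_injective _).comp (mul_right_injective₀ hm)

theorem exists_eq_image_affine_of_emod_eq {A : Finset ℤ} {r : ℤ} (h : ∀ a ∈ A, a % m = r) :
    ∃ B : Finset ℤ, A = B.image (m * · + r) := by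
  refine ⟨A.image (· / m), ?_⟩
  rw [image_image]
  conv_lhs => rw [← image_id (s := A)]
  refine image_congr fun a ha => ?_
  simp only [Function.comp_apply, id, ← h a ha, Int.mul_ediv_add_emod]

theorem three_mul_card_le_card_add_image_mul_of_natAbs_sub_le (hl : 2 ≤ l.natAbs) (n : ℕ)
    (A : Finset ℤ) (hA : ∀ a ∈ A, ∀ b ∈ A, (a - b).natAbs ≤ n) :
    3 * #A ≤ #(A + A.image (l * ·)) + 2 := by
  induction n using Nat.strong_induction_on generalizing A with
  | _ n ih =>
  set m : ℤ := (l.natAbs : ℤ)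
  have hm : m ≠ 0 := by omega
  rcases le_or_gt #A 1 with hA1 | hA1
  · rcases A.eq_empty_or_nonempty with rfl | ⟨a, ha⟩
    · simp
    have : 0 < #(A + A.image (l * ·)) :=
      card_pos.2 ⟨a + l * a, add_mem_add ha (mem_image_of_mem (l * ·) ha)⟩
    omega
  obtain ⟨a, ha, b, hb, hab⟩ := one_lt_card.1 hA1
  rcases le_or_gt #(A.image (· % m)) 1 with hR | hR
  · obtain ⟨B, rfl⟩ := exists_eq_image_affine_of_emod_eq (r := a % m) fun c hc =>
      card_le_one.1 hR _ (mem_image_of_mem _ hc) _ (mem_image_of_mem _ ha)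
    have hinj : Function.Injective (m * · + a % m) := fun x y h =>
      mul_left_cancel₀ hm (add_right_cancel h)
    rw [card_add_image_mul_image_affine hm, card_image_of_injective _ hinj]
    refine ih (n / 2) ?_ B fun b hb c hc => ?_
    · have := hA a ha b hb
      omega
    · have := hA _ (mem_image_of_mem _ hb) _ (mem_image_of_mem _ hc)
      rw [add_sub_add_right_eq_sub, ← mul_sub, Int.natAbs_mul] at this
      have : 2 * (b - c).natAbs ≤ m.natAbs * (b - c).natAbs := Nat.mul_le_mul_right _ (by omega)
      omega
  · have := card_add_card_residues_mul_le_card_add_image_mul (l := l) (m := m) (by omega)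
      Int.natAbs_dvd_self A
    have : 2 * (#A - 1) ≤ #(A.image (· % m)) * (#A - 1) := Nat.mul_le_mul_right _ hR
    omega

theorem three_mul_card_le_card_add_image_mul (hl : 2 ≤ l.natAbs) (A : Finset ℤ) :
    3 * #A ≤ #(A + A.image (l * ·)) + 2 :=
  three_mul_card_le_card_add_image_mul_of_natAbs_sub_le hl
    ((A ×ˢ A).sup fun p => (p.1 - p.2).natAbs) A fun a ha b hb =>
      le_sup (f := fun p => (p.1 - p.2).natAbs) (mem_product.2 ⟨ha, hb⟩ : (a, b) ∈ A ×ˢ A)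

theorem hamidoune_plagne_general (l : ℤ) (hl : l ≠ -1 ∧ l ≠ 0 ∧ l ≠ 1)
    (A : Finset ℤ) :
    3 * (A.card : ℤ) - 2 ≤ ((A + A.image fun a => l • a).card : ℤ) := by
  have := three_mul_card_le_card_add_image_mul (l := l) (by omega) A
  simp only [smul_eq_mul]
  omega

theorem hamidoune_plagne (l : ℤ) (hl : l ≠ -1 ∧ l ≠ 0 ∧ l ≠ 1)
    (A : Finset ℤ) (hA : A.Nonempty) :
    3 * (A.card : ℤ) - 2 ≤ ((A + A.image fun a => l • a).card : ℤ) :=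
  hamidoune_plagne_general l hl A
end
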